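/- arXiv:0808.2349 — 6 statements merged into one kernel-verified Lean document; each statement's English description precedes it below -/
import Mathlib

section
/- For every integer d ≥ 1, the function x ↦ B_d(x) is log-concave on the open interval (0, d); that is, for all x, y in (0,d) and t in [0,1], B_d(tx + (1-t)y) ≥ B_d(x)^t · B_d(y)^{1-t}. -/
open MeasureTheory

/-- B-splines: `B 1` is the indicator of `[0,1)`, and `B d x = ∫_0^1 B (d-1) (x - t) dt`. -/
noncomputable def B : ℕ → ℝ → ℝ
  | 0, _ => 0
  | 1, x => if 0 ≤ x ∧ x < 1 then 1 else 0
  | d + 2, x => ∫ t in (0:ℝ)..(1:ℝ), B (d + 1) (x - t)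

/-!
`B (d + 2)` is obtained from `B (d + 1)` by integrating `(x, u) ↦ 1_{[0,1]}(u) B (d + 1) (x - u)`
over `u`, and this integrand is jointly log-concave when `B (d + 1)` is. Log-concavity therefore
propagates by the one-dimensional Prékopa–Leindler inequality
`(∫ f) ^ t (∫ g) ^ (1 - t) ≤ ∫ h` whenever `f u ^ t g v ^ (1 - t) ≤ h (t u + (1 - t) v)`.
After normalizing `f` and `g` to have supremum `1`, the layer-cake formula reduces it to the
Brunn–Minkowski inequality `|S| + |T| ≤ |S + T|` on the line, applied to the superlevel sets
`t • {f > s}` and `(1 - t) • {g > s}`.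
-/

open Set Pointwise

theorem exists_isLUB_range_pos {α : Type*} {φ : α → ℝ} (hφ₀ : 0 ≤ φ) (hφ : φ ≠ 0)
    (hφ₁ : BddAbove (range φ)) : ∃ a, IsLUB (range φ) a ∧ 0 < a := by
  obtain ⟨u, hu⟩ := Function.ne_iff.1 hφ
  exact ⟨_, isLUB_csSup ⟨_, u, rfl⟩ hφ₁,
    ((hφ₀ u).lt_of_ne' hu).trans_le (le_csSup hφ₁ ⟨u, rfl⟩)⟩

namespace Real

theorem volume_add_volume_le_volume_add_of_isCompact {K L : Set ℝ} (hK : IsCompact K)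
    (hL : IsCompact L) (hK₀ : K.Nonempty) (hL₀ : L.Nonempty) :
    volume K + volume L ≤ volume (K + L) := by
  set k := sSup K
  set l := sInf L
  -- `l +ᵥ K` and `k +ᵥ L` lie in `K + L` and meet only at the point `k + l`.
  have hinter : (l +ᵥ K) ∩ (k +ᵥ L) ⊆ {l + k} := by
    rintro _ ⟨⟨a, ha, rfl⟩, ⟨b, hb, hab⟩⟩
    have : a ≤ k := le_csSup hK.bddAbove ha
    have : l ≤ b := csInf_le hL.bddBelow hb
    simp only [vadd_eq_add] at hab ⊢
    rw [mem_singleton_iff]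
    linarith
  calc volume K + volume L = volume (l +ᵥ K) + volume (k +ᵥ L) := by
        rw [measure_vadd, measure_vadd]
    _ = volume ((l +ᵥ K) ∪ (k +ᵥ L)) := by
        rw [← measure_union_add_inter _ (hL.vadd k).measurableSet,
          measure_mono_null hinter (measure_singleton _), add_zero]
    _ ≤ volume (K + L) := by
        refine measure_mono (union_subset ?_ ?_)
        · rw [add_comm]
          exact vadd_set_subset_add (hL.sInf_mem hL₀)
        · exact vadd_set_subset_add (hK.sSup_mem hK₀)

theorem volume_add_volume_le_volume_add {S T : Set ℝ} (hS : MeasurableSet S)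
    (hT : MeasurableSet T) (hS₀ : S.Nonempty) (hT₀ : T.Nonempty) :
    volume S + volume T ≤ volume (S + T) := by
  obtain ⟨a, ha⟩ := hS₀
  obtain ⟨b, hb⟩ := hT₀
  rw [hS.measure_eq_iSup_isCompact, hT.measure_eq_iSup_isCompact]
  simp only [iSup_and']
  refine ENNReal.biSup_add_biSup_le' ⟨∅, empty_subset _, isCompact_empty⟩
    ⟨∅, empty_subset _, isCompact_empty⟩ fun K ⟨hKS, hK⟩ L ⟨hLT, hL⟩ => ?_
  -- Adding a point makes the compact sets nonempty without leaving `S` and `T`.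
  calc volume K + volume L ≤ volume (insert a K) + volume (insert b L) := by
        gcongr <;> exact subset_insert _ _
    _ ≤ volume (insert a K + insert b L) :=
        volume_add_volume_le_volume_add_of_isCompact (hK.insert a) (hL.insert b)
          (insert_nonempty _ _) (insert_nonempty _ _)
    _ ≤ volume (S + T) :=
        measure_mono (add_subset_add (insert_subset ha hKS) (insert_subset hb hLT))

variable {f g h : ℝ → ℝ} {t : ℝ}

theorem nonneg_of_rpow_mul_rpow_le (hf₀ : 0 ≤ f) (hg₀ : 0 ≤ g)
    (hfgh : ∀ u v, f u ^ t * g v ^ (1 - t) ≤ h (t * u + (1 - t) * v)) : 0 ≤ h := fun w => by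
  simpa [← add_mul] using
    (mul_nonneg (rpow_nonneg (hf₀ w) t) (rpow_nonneg (hg₀ w) (1 - t))).trans (hfgh w w)

theorem volume_superlevelSet_weighted_add_le (ht : t ∈ Ioo 0 1) (hf : Measurable f)
    (hg : Measurable g) (hfgh : ∀ u v, f u ^ t * g v ^ (1 - t) ≤ h (t * u + (1 - t) * v))
    {s : ℝ} (hs : 0 < s) (hfs : {u | s < f u}.Nonempty) (hgs : {v | s < g v}.Nonempty) :
    ENNReal.ofReal t * volume {u | s < f u} + ENNReal.ofReal (1 - t) * volume {v | s < g v} ≤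
      volume {w | s < h w} := by
  have hsub : t • {u | s < f u} + (1 - t) • {v | s < g v} ⊆ {w | s < h w} := by
    rintro _ ⟨_, ⟨u, hu, rfl⟩, _, ⟨v, hv, rfl⟩, rfl⟩
    calc s = s ^ t * s ^ (1 - t) := by rw [← rpow_add hs, add_sub_cancel, rpow_one]
      _ < f u ^ t * g v ^ (1 - t) :=
          mul_lt_mul'' (rpow_lt_rpow hs.le hu ht.1) (rpow_lt_rpow hs.le hv (sub_pos.2 ht.2))
            (by positivity) (by positivity)
      _ ≤ h (t * u + (1 - t) * v) := hfgh u v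
  have hvol (c : ℝ) (hc : 0 ≤ c) (A : Set ℝ) : volume (c • A) = ENNReal.ofReal c * volume A := by
    rw [Measure.addHaar_smul_of_nonneg _ hc, Module.finrank_self, pow_one]
  rw [← hvol t ht.1.le, ← hvol (1 - t) (sub_nonneg.2 ht.2.le)]
  exact (volume_add_volume_le_volume_add ((measurableSet_lt measurable_const hf).const_smul₀ t)
    ((measurableSet_lt measurable_const hg).const_smul₀ (1 - t)) hfs.smul_set hgs.smul_set).trans
    (measure_mono hsub)

theorem lintegral_weighted_add_le_of_isLUB_one (ht : t ∈ Ioo 0 1) (hf : Measurable f)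
    (hg : Measurable g) (hh : AEMeasurable h) (hf₀ : 0 ≤ f) (hg₀ : 0 ≤ g)
    (hf₁ : IsLUB (range f) 1) (hg₁ : IsLUB (range g) 1)
    (hfgh : ∀ u v, f u ^ t * g v ^ (1 - t) ≤ h (t * u + (1 - t) * v)) :
    ENNReal.ofReal t * (∫⁻ u, ENNReal.ofReal (f u)) +
      ENNReal.ofReal (1 - t) * (∫⁻ v, ENNReal.ofReal (g v)) ≤ ∫⁻ w, ENNReal.ofReal (h w) := by
  have hsuper : ∀ s > 0, ENNReal.ofReal t * volume {u | s < f u} +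
      ENNReal.ofReal (1 - t) * volume {v | s < g v} ≤ volume {w | s < h w} := by
    intro s hs
    rcases lt_or_ge s 1 with hs₁ | hs₁
    · obtain ⟨_, ⟨u, rfl⟩, hu, -⟩ := hf₁.exists_between hs₁
      obtain ⟨_, ⟨v, rfl⟩, hv, -⟩ := hg₁.exists_between hs₁
      exact volume_superlevelSet_weighted_add_le ht hf hg hfgh hs ⟨u, hu⟩ ⟨v, hv⟩
    · have hempty {φ : ℝ → ℝ} (hφ : IsLUB (range φ) 1) : {u | s < φ u} = ∅ :=
        eq_empty_of_forall_notMem fun u hu => (hφ.1 ⟨u, rfl⟩).not_gt (hs₁.trans_lt hu)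
      simp [hempty hf₁, hempty hg₁]
  rw [lintegral_eq_lintegral_meas_lt volume (ae_of_all _ hf₀) hf.aemeasurable,
    lintegral_eq_lintegral_meas_lt volume (ae_of_all _ hg₀) hg.aemeasurable,
    lintegral_eq_lintegral_meas_lt volume
      (ae_of_all _ (nonneg_of_rpow_mul_rpow_le hf₀ hg₀ hfgh)) hh,
    ← lintegral_const_mul' _ _ ENNReal.ofReal_ne_top,
    ← lintegral_const_mul' _ _ ENNReal.ofReal_ne_top]
  exact (le_lintegral_add _ _).trans (setLIntegral_mono' measurableSet_Ioi hsuper)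

theorem isLUB_range_div {a : ℝ} (hf : IsLUB (range f) a) (ha : 0 < a) :
    IsLUB (range fun u => f u / a) 1 := by
  have := hf.mul_right (inv_nonneg.2 ha.le)
  rwa [mul_inv_cancel₀ ha.ne', ← range_comp] at this

theorem integral_rpow_mul_integral_rpow_le_integral (ht : t ∈ Ioo 0 1) (hf : Measurable f)
    (hg : Measurable g) (hf₀ : 0 ≤ f) (hg₀ : 0 ≤ g) (hf₁ : BddAbove (range f))
    (hg₁ : BddAbove (range g)) (hfi : Integrable f) (hgi : Integrable g) (hhi : Integrable h)
    (hfgh : ∀ u v, f u ^ t * g v ^ (1 - t) ≤ h (t * u + (1 - t) * v)) :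
    (∫ u, f u) ^ t * (∫ v, g v) ^ (1 - t) ≤ ∫ w, h w := by
  have hh₀ := nonneg_of_rpow_mul_rpow_le hf₀ hg₀ hfgh
  have ht' : 0 < 1 - t := sub_pos.2 ht.2
  rcases (integral_nonneg hf₀).eq_or_lt with hF | hF
  · rw [← hF, zero_rpow ht.1.ne', zero_mul]
    exact integral_nonneg hh₀
  rcases (integral_nonneg hg₀).eq_or_lt with hG | hG
  · rw [← hG, zero_rpow ht'.ne', mul_zero]
    exact integral_nonneg hh₀
  obtain ⟨a, hfa, ha⟩ := exists_isLUB_range_pos hf₀ (by rintro rfl; simp at hF) hf₁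
  obtain ⟨b, hgb, hb⟩ := exists_isLUB_range_pos hg₀ (by rintro rfl; simp at hG) hg₁
  set c := a ^ t * b ^ (1 - t)
  have hc : 0 < c := by positivity
  have key := lintegral_weighted_add_le_of_isLUB_one ht (hf.div_const a) (hg.div_const b)
    (hhi.aemeasurable.div_const c) (fun u => div_nonneg (hf₀ u) ha.le)
    (fun v => div_nonneg (hg₀ v) hb.le) (isLUB_range_div hfa ha) (isLUB_range_div hgb hb)
    fun u v => by
      rw [div_rpow (hf₀ u) ha.le, div_rpow (hg₀ v) hb.le, div_mul_div_comm]
      exact div_le_div_of_nonneg_right (hfgh u v) hc.le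
  have hF₀ u : 0 ≤ f u / a := div_nonneg (hf₀ u) ha.le
  have hG₀ v : 0 ≤ g v / b := div_nonneg (hg₀ v) hb.le
  have hH₀ w : 0 ≤ h w / c := div_nonneg (hh₀ w) hc.le
  rw [← ofReal_integral_eq_lintegral_ofReal (hfi.div_const a) (ae_of_all _ hF₀),
    ← ofReal_integral_eq_lintegral_ofReal (hgi.div_const b) (ae_of_all _ hG₀),
    ← ofReal_integral_eq_lintegral_ofReal (hhi.div_const c) (ae_of_all _ hH₀),
    ← ENNReal.ofReal_mul ht.1.le, ← ENNReal.ofReal_mul ht'.le,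
    ← ENNReal.ofReal_add (mul_nonneg ht.1.le (integral_nonneg hF₀))
      (mul_nonneg ht'.le (integral_nonneg hG₀)),
    ENNReal.ofReal_le_ofReal_iff (integral_nonneg hH₀), integral_div, integral_div,
    integral_div] at key
  calc (∫ u, f u) ^ t * (∫ v, g v) ^ (1 - t)
      = ((∫ u, f u) / a) ^ t * ((∫ v, g v) / b) ^ (1 - t) * c := by
        rw [div_rpow hF.le ha.le, div_rpow hG.le hb.le, div_mul_div_comm,
          div_mul_cancel₀ _ hc.ne']
    _ ≤ (t * ((∫ u, f u) / a) + (1 - t) * ((∫ v, g v) / b)) * c := by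
        gcongr
        exact geom_mean_le_arith_mean2_weighted ht.1.le ht'.le (by positivity) (by positivity)
          (add_sub_cancel t 1)
    _ ≤ (∫ w, h w) / c * c := by gcongr
    _ = ∫ w, h w := div_mul_cancel₀ _ hc.ne'

end Real

section LogConcave

variable {E F : Type*} [AddCommGroup E] [Module ℝ E] [AddCommGroup F] [Module ℝ F]

def IsLogConcave (φ : E → ℝ) : Prop :=
  ∀ ⦃x y : E⦄ ⦃t : ℝ⦄, t ∈ Ioo 0 1 → φ x ^ t * φ y ^ (1 - t) ≤ φ (t • x + (1 - t) • y)

theorem IsLogConcave.rpow_mul_rpow_le {φ : E → ℝ} (hφ : IsLogConcave φ) (x y : E) {t : ℝ}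
    (ht : t ∈ Icc 0 1) : φ x ^ t * φ y ^ (1 - t) ≤ φ (t • x + (1 - t) • y) := by
  rcases ht.1.eq_or_lt with rfl | ht₀
  · simp
  rcases ht.2.eq_or_lt with rfl | ht₁
  · simp
  exact hφ ⟨ht₀, ht₁⟩

theorem isLogConcave_zero : IsLogConcave (0 : E → ℝ) := fun _ _ _ ht => by
  simp [Real.zero_rpow ht.1.ne']

theorem isLogConcave_one : IsLogConcave (1 : E → ℝ) := fun _ _ _ _ => by simp

theorem IsLogConcave.comp_linearMap {φ : F → ℝ} (hφ : IsLogConcave φ) (L : E →ₗ[ℝ] F) :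
    IsLogConcave (φ ∘ L) := fun x y _ ht => by
  simpa using hφ (x := L x) (y := L y) ht

theorem IsLogConcave.indicator {φ : E → ℝ} (hφ : IsLogConcave φ) (hφ₀ : 0 ≤ φ) {s : Set E}
    (hs : Convex ℝ s) : IsLogConcave (s.indicator φ) := by
  intro x y t ht
  by_cases hxy : x ∈ s ∧ y ∈ s
  · rw [indicator_of_mem hxy.1, indicator_of_mem hxy.2,
      indicator_of_mem (hs hxy.1 hxy.2 ht.1.le (sub_nonneg.2 ht.2.le) (add_sub_cancel t 1))]
    exact hφ ht
  · have hzero : s.indicator φ x ^ t * s.indicator φ y ^ (1 - t) = 0 := by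
      rcases not_and_or.1 hxy with hx | hy
      · rw [indicator_of_notMem hx, Real.zero_rpow ht.1.ne', zero_mul]
      · rw [indicator_of_notMem hy, Real.zero_rpow (sub_pos.2 ht.2).ne', mul_zero]
    rw [hzero]
    exact indicator_nonneg (fun z _ => hφ₀ z) _

end LogConcave

section Convolution

variable {φ : ℝ → ℝ} {a b : ℝ}

theorem measurable_intervalIntegral_comp_sub (hφ : Measurable φ) (hab : a ≤ b) :
    Measurable fun x => ∫ u in a..b, φ (x - u) := by
  simp_rw [intervalIntegral.integral_of_le hab]
  exact (StronglyMeasurable.integral_prod_right' (f := fun p : ℝ × ℝ => φ (p.1 - p.2))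
    (hφ.comp measurable_sub).stronglyMeasurable).measurable

theorem IsLogConcave.intervalIntegral_comp_sub (hφ : IsLogConcave φ) (hφm : Measurable φ)
    (hφ₀ : 0 ≤ φ) (hφ₁ : BddAbove (range φ)) (hab : a ≤ b) :
    IsLogConcave fun x => ∫ u in a..b, φ (x - u) := by
  obtain ⟨C, hC⟩ := hφ₁
  have hCφ (x) : φ x ≤ C := hC ⟨x, rfl⟩
  set F : ℝ → ℝ → ℝ := fun x => (Icc a b).indicator fun u => φ (x - u)
  have hFm (x) : Measurable (F x) :=
    (hφm.comp (measurable_const.sub measurable_id)).indicator measurableSet_Icc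
  have hF₀ (x) : 0 ≤ F x := indicator_nonneg fun u _ => hφ₀ _
  have hF₁ (x) : BddAbove (range (F x)) := ⟨C, forall_mem_range.2 fun u =>
    indicator_apply_le' (fun _ => hCφ _) fun _ => (hφ₀ 0).trans (hCφ 0)⟩
  have hFi (x) : Integrable (F x) := by
    refine (Measure.integrableOn_of_bounded (μ := volume) measure_Icc_lt_top.ne
      (hφm.comp (measurable_const.sub measurable_id)).aestronglyMeasurable (M := C)
      (ae_of_all _ fun u => ?_)).integrable_indicator measurableSet_Icc
    exact (Real.norm_of_nonneg (hφ₀ _)).trans_le (hCφ _)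
  have hFint (x) : ∫ u, F x u = ∫ u in a..b, φ (x - u) := by
    rw [integral_indicator measurableSet_Icc, integral_Icc_eq_integral_Ioc,
      intervalIntegral.integral_of_le hab]
  have hψ : IsLogConcave fun p : ℝ × ℝ => F p.1 p.2 :=
    (hφ.comp_linearMap (LinearMap.fst ℝ ℝ ℝ - LinearMap.snd ℝ ℝ ℝ)).indicator (fun _ => hφ₀ _)
      ((convex_Icc a b).linear_preimage (LinearMap.snd ℝ ℝ ℝ))
  intro x y t ht
  simp only [← hFint]
  refine Real.integral_rpow_mul_integral_rpow_le_integral ht (hFm x) (hFm y) (hF₀ x) (hF₀ y)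
    (hF₁ x) (hF₁ y) (hFi x) (hFi y) (hFi _) fun u v => ?_
  simpa using hψ (x := (x, u)) (y := (y, v)) ht

end Convolution

theorem B_one : B 1 = (Ico 0 1).indicator 1 := by
  ext x
  simp [B, indicator]

theorem B_nonneg (d : ℕ) : 0 ≤ B d := by
  induction d using Nat.twoStepInduction with
  | zero => exact le_rfl
  | one => exact B_one ▸ indicator_nonneg fun _ _ => zero_le_one
  | more d _ ih => exact fun x => intervalIntegral.integral_nonneg zero_le_one fun _ _ => ih _

theorem B_le_one (d : ℕ) (x : ℝ) : B d x ≤ 1 := by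
  induction d using Nat.twoStepInduction generalizing x with
  | zero => exact zero_le_one
  | one => exact B_one ▸ indicator_le_self' (fun _ _ => zero_le_one) x
  | more d _ ih =>
    calc B (d + 2) x ≤ ‖∫ u in (0 : ℝ)..1, B (d + 1) (x - u)‖ := Real.le_norm_self _
      _ ≤ 1 * |1 - 0| := intervalIntegral.norm_integral_le_of_norm_le_const fun _ _ =>
          (Real.norm_of_nonneg (B_nonneg _ _)).trans_le (ih _)
      _ = 1 := by norm_num

theorem measurable_B (d : ℕ) : Measurable (B d) := by
  induction d using Nat.twoStepInduction with
  | zero => exact measurable_const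
  | one => exact B_one ▸ measurable_one.indicator measurableSet_Ico
  | more d _ ih => exact measurable_intervalIntegral_comp_sub ih zero_le_one

theorem isLogConcave_B (d : ℕ) : IsLogConcave (B d) := by
  induction d using Nat.twoStepInduction with
  | zero => exact isLogConcave_zero
  | one => exact B_one ▸ isLogConcave_one.indicator (fun _ => zero_le_one) (convex_Ico 0 1)
  | more d _ ih =>
    exact ih.intervalIntegral_comp_sub (measurable_B _) (B_nonneg _)
      ⟨1, forall_mem_range.2 (B_le_one _)⟩ zero_le_one

theorem bspline_log_concave_general (d : ℕ) (x y t : ℝ) (ht : t ∈ Set.Icc (0 : ℝ) 1) :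
    B d x ^ t * B d y ^ (1 - t) ≤ B d (t * x + (1 - t) * y) :=
  (isLogConcave_B d).rpow_mul_rpow_le x y ht

theorem bspline_log_concave (d : ℕ) (hd : 1 ≤ d) (x y t : ℝ)
    (hx : x ∈ Set.Ioo (0 : ℝ) d) (hy : y ∈ Set.Ioo (0 : ℝ) d) (ht : t ∈ Set.Icc (0 : ℝ) 1) :
    B d x ^ t * B d y ^ (1 - t) ≤ B d (t * x + (1 - t) * y) :=
  bspline_log_concave_general d x y t ht
end

section
/- For all integers d ≥ 1 and 1 ≤ k ≤ d, the Eulerian number A_{d,k} equals the d-dimensional volume, normalized by d!, of the slice T_k^d = {x ∈ [0,1]^d : k-1 ≤ x_1 + ... + x_d ≤ k}; i.e., A_{d,k} = d! · Vol(T_k^d). -/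
open MeasureTheory
open scoped ENNReal

/-- The number of descents of a permutation `σ` of `{0, …, d-1}`:
indices `i` with `i + 1 < d` and `σ i > σ (i+1)`. -/
def descents {d : ℕ} (σ : Equiv.Perm (Fin d)) : ℕ :=
  (Finset.univ.filter fun i : Fin d =>
    if h : i.val + 1 < d then σ ⟨i.val + 1, h⟩ < σ i else False).card

/-- The Eulerian number `A_{d,k}`: permutations of `d` elements with exactly `k-1` descents. -/
def eulerian (d k : ℕ) : ℕ :=
  (Finset.univ.filter fun σ : Equiv.Perm (Fin d) => descents σ = k - 1).card

/-!
Stanley's argument. For `y` in the half-open cube `[0,1)^d` let `s_j = y_0 + ⋯ + y_j`. Consecutive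
partial sums differ by less than `1`, so `⌊s_{j+1}⌋ - ⌊s_j⌋` is `1` exactly when the fractional
parts descend at `j`; hence `⌊∑ y⌋` is the number of descents of `fract ∘ s`. The partial-sum map
carries the cube onto another fundamental domain of `ℤ^d`, and both domains meet the
`ℤ^d`-invariant set `{s : fract ∘ s has k - 1 descents}` in the same volume. So the slice has the
volume of `{x ∈ [0,1)^d : x has k - 1 descents}`, which up to a null set is the disjoint union of
the order cells `{x : x_{σ⁻¹ 0} < ⋯ < x_{σ⁻¹ (d-1)}}` over the permutations `σ` with `k - 1`
descents, each of volume `1 / d!`.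
-/

theorem measure_setOf_linearMap_eq_null {E : Type*} [NormedAddCommGroup E] [NormedSpace ℝ E]
    [MeasurableSpace E] [BorelSpace E] [FiniteDimensional ℝ E] (μ : Measure E)
    [μ.IsAddHaarMeasure] {l : E →ₗ[ℝ] ℝ} (hl : l ≠ 0) (c : ℝ) : μ {x | l x = c} = 0 := by
  obtain ⟨v, hv⟩ : ∃ v, l v ≠ 0 := by simpa [LinearMap.ext_iff] using hl
  have hker : LinearMap.ker l ≠ ⊤ := fun h => hv (LinearMap.ker_eq_top.1 h ▸ rfl)
  have hset : {x | l x = c} = (· + -((c / l v) • v)) ⁻¹' (LinearMap.ker l : Set E) := by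
    ext x
    simp [sub_eq_zero, hv, ← sub_eq_add_neg]
  rw [hset, measure_preimage_add_right, Measure.addHaar_submodule μ _ hker]

section NullSets

variable {ι : Type*} [Fintype ι]

theorem volume_setOf_apply_eq (i : ι) (c : ℝ) : volume {x : ι → ℝ | x i = c} = 0 := by
  classical
  refine measure_setOf_linearMap_eq_null volume (l := LinearMap.proj (R := ℝ) (φ := fun _ => ℝ) i)
    (fun h => ?_) c
  simpa using LinearMap.congr_fun h (Pi.single i 1)

theorem volume_setOf_apply_eq_apply {i j : ι} (hij : i ≠ j) :
    volume {x : ι → ℝ | x i = x j} = 0 := by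
  classical
  let l : (ι → ℝ) →ₗ[ℝ] ℝ := LinearMap.proj i - LinearMap.proj (R := ℝ) (φ := fun _ => ℝ) j
  have hl : l ≠ 0 := fun h => by
    simpa [l, Pi.single_apply, hij.symm] using LinearMap.congr_fun h (Pi.single i 1)
  simpa [l, sub_eq_zero] using measure_setOf_linearMap_eq_null volume hl 0

theorem volume_setOf_sum_eq [Nonempty ι] (c : ℝ) : volume {x : ι → ℝ | ∑ i, x i = c} = 0 := by
  classical
  let l : (ι → ℝ) →ₗ[ℝ] ℝ := ∑ i, LinearMap.proj (R := ℝ) (φ := fun _ => ℝ) i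
  have hl : l ≠ 0 := fun h => by
    simpa [l] using LinearMap.congr_fun h (Pi.single (Classical.arbitrary ι) 1)
  simpa [l] using measure_setOf_linearMap_eq_null volume hl c

theorem volume_setOf_not_injective : volume {x : ι → ℝ | ¬ Function.Injective x} = 0 := by
  have hsub : {x : ι → ℝ | ¬ Function.Injective x} ⊆
      ⋃ (p : ι × ι) (_ : p.1 ≠ p.2), {x | x p.1 = x p.2} := by
    intro x hx
    simp only [Function.Injective, not_forall] at hx
    obtain ⟨i, j, hij, hne⟩ := hx
    exact Set.mem_biUnion (x := (i, j)) hne hij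
  exact measure_mono_null hsub
    (measure_iUnion_null fun _ => measure_iUnion_null volume_setOf_apply_eq_apply)

end NullSets

theorem Fin.sum_succ_sub_castSucc {M : Type*} [AddCommGroup M] {n : ℕ} (f : Fin (n + 1) → M) :
    ∑ i : Fin n, (f i.succ - f i.castSucc) = f (Fin.last n) - f 0 := by
  induction n with
  | zero => simp
  | succ n ih =>
    have := ih (f ∘ Fin.castSucc)
    simp only [Function.comp_apply] at this
    rw [Fin.sum_univ_castSucc, Fin.succ_last]
    simp only [Fin.succ_castSucc]
    rw [this]
    simp

theorem Int.floor_sub_floor_eq_ite {α : Type*} [CommRing α] [LinearOrder α]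
    [IsStrictOrderedRing α] [FloorRing α] {a b : α} (h : b - a ∈ Set.Ico 0 1) :
    ⌊b⌋ - ⌊a⌋ = if Int.fract b < Int.fract a then 1 else 0 := by
  have hsplit : ((⌊b⌋ - ⌊a⌋ : ℤ) : α) = (b - a) - (Int.fract b - Int.fract a) := by
    push_cast [Int.fract]; ring
  have := Int.fract_nonneg a
  have := Int.fract_lt_one a
  have := Int.fract_nonneg b
  have := Int.fract_lt_one b
  obtain ⟨hlo, hhi⟩ := h
  split_ifs with hf
  · have h₁ : ((0 : ℤ) : α) < ((⌊b⌋ - ⌊a⌋ : ℤ) : α) := by rw [hsplit]; push_cast; linarith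
    have h₂ : ((⌊b⌋ - ⌊a⌋ : ℤ) : α) < ((2 : ℤ) : α) := by rw [hsplit]; push_cast; linarith
    have := Int.cast_lt.1 h₁
    have := Int.cast_lt.1 h₂
    omega
  · have h₁ : ((-1 : ℤ) : α) < ((⌊b⌋ - ⌊a⌋ : ℤ) : α) := by rw [hsplit]; push_cast; linarith
    have h₂ : ((⌊b⌋ - ⌊a⌋ : ℤ) : α) < ((1 : ℤ) : α) := by rw [hsplit]; push_cast; linarith
    have := Int.cast_lt.1 h₁
    have := Int.cast_lt.1 h₂
    omega

def descentCount {d : ℕ} {α : Type*} [LinearOrder α] (f : Fin d → α) : ℕ :=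
  (Finset.univ.filter fun i : Fin d =>
    if h : i.val + 1 < d then f ⟨i.val + 1, h⟩ < f i else False).card

theorem descentCount_eq_card_succ_lt_castSucc {n : ℕ} {α : Type*} [LinearOrder α]
    (f : Fin (n + 1) → α) :
    descentCount f = (Finset.univ.filter fun i : Fin n => f i.succ < f i.castSucc).card := by
  rw [descentCount, Finset.card_filter, Finset.card_filter, Fin.sum_univ_castSucc]
  simp [Fin.succ]

theorem descentCount_congr {d : ℕ} {α β : Type*} [LinearOrder α] [LinearOrder β]
    {f : Fin d → α} {g : Fin d → β} (h : ∀ i j, f i < f j ↔ g i < g j) :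
    descentCount f = descentCount g := by
  simp only [descentCount, h]

theorem measurable_descentCount {d : ℕ} : Measurable (descentCount : (Fin d → ℝ) → ℕ) := by
  unfold descentCount
  simp_rw [Finset.card_filter]
  refine Finset.measurable_sum _ fun i _ => Measurable.ite ?_ measurable_const measurable_const
  split_ifs
  · exact measurableSet_lt (measurable_pi_apply _) (measurable_pi_apply _)
  · exact MeasurableSet.empty

def unitCube (ι : Type*) : Set (ι → ℝ) := Set.univ.pi fun _ => Set.Ico 0 1

theorem mem_unitCube {ι : Type*} {x : ι → ℝ} : x ∈ unitCube ι ↔ ∀ i, x i ∈ Set.Ico 0 1 := by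
  simp [unitCube]

theorem volume_unitCube (ι : Type*) [Fintype ι] : volume (unitCube ι) = 1 := by
  simp [unitCube, volume_pi_pi]

abbrev intLattice (ι : Type*) [Finite ι] : AddSubgroup (ι → ℝ) :=
  (Submodule.span ℤ (Set.range (Pi.basisFun ℝ ι))).toAddSubgroup

-- instance search finds `Countable` for the submodule but not for its `toAddSubgroup`
instance (ι : Type*) [Finite ι] : Countable (intLattice ι) :=
  inferInstanceAs (Countable (Submodule.span ℤ (Set.range (Pi.basisFun ℝ ι))))

theorem isAddFundamentalDomain_unitCube (ι : Type*) [Fintype ι] :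
    IsAddFundamentalDomain (intLattice ι) (unitCube ι) volume := by
  rw [unitCube, ← ZSpan.fundamentalDomain_pi_basisFun]
  exact ZSpan.isAddFundamentalDomain' _ volume

section Differences

variable {n : ℕ}

def finDiff (n : ℕ) : (Fin (n + 1) → ℝ) →ₗ[ℝ] (Fin (n + 1) → ℝ) where
  toFun s := Fin.cons (s 0) fun j => s j.succ - s j.castSucc
  map_add' s t := by ext i; cases i using Fin.cases <;> simp [add_sub_add_comm]
  map_smul' c s := by ext i; cases i using Fin.cases <;> simp [mul_sub]

@[simp] theorem finDiff_apply_zero (s : Fin (n + 1) → ℝ) : finDiff n s 0 = s 0 := rfl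

@[simp] theorem finDiff_apply_succ (s : Fin (n + 1) → ℝ) (j : Fin n) :
    finDiff n s j.succ = s j.succ - s j.castSucc := rfl

theorem sum_finDiff (s : Fin (n + 1) → ℝ) : ∑ i, finDiff n s i = s (Fin.last n) := by
  simp only [Fin.sum_univ_succ, finDiff_apply_zero, finDiff_apply_succ, Fin.sum_succ_sub_castSucc]
  abel

theorem finDiff_injective : Function.Injective (finDiff n) := by
  rw [← LinearMap.ker_eq_bot, LinearMap.ker_eq_bot']
  intro s hs
  ext i
  induction i using Fin.induction with
  | zero => simpa using congrFun hs 0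
  | succ j ih => simpa [ih, sub_eq_zero] using congrFun hs j.succ

noncomputable def finDiffEquiv (n : ℕ) : (Fin (n + 1) → ℝ) ≃ₗ[ℝ] (Fin (n + 1) → ℝ) :=
  LinearEquiv.ofInjectiveEndo (finDiff n) finDiff_injective

@[simp] theorem coe_finDiffEquiv : ⇑(finDiffEquiv n) = finDiff n :=
  LinearEquiv.coe_ofInjectiveEndo _ _

theorem forall_finDiff_mem_range_intCast_iff (s : Fin (n + 1) → ℝ) :
    (∀ i, finDiff n s i ∈ Set.range ((↑) : ℤ → ℝ)) ↔ ∀ i, s i ∈ Set.range ((↑) : ℤ → ℝ) := by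
  refine ⟨fun h i => ?_, fun h i => ?_⟩
  · induction i using Fin.induction with
    | zero => simpa using h 0
    | succ j ih =>
      obtain ⟨a, ha⟩ := ih
      obtain ⟨b, hb⟩ := h j.succ
      exact ⟨b + a, by rw [Int.cast_add, hb, ha, finDiff_apply_succ, sub_add_cancel]⟩
  · cases i using Fin.cases with
    | zero => simpa using h 0
    | succ j =>
      obtain ⟨a, ha⟩ := h j.succ
      obtain ⟨b, hb⟩ := h j.castSucc
      exact ⟨a - b, by simp [ha, hb]⟩

theorem isAddFundamentalDomain_finDiff_preimage_unitCube (n : ℕ) :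
    IsAddFundamentalDomain (intLattice (Fin (n + 1))) (finDiff n ⁻¹' unitCube _) volume := by
  let b := Module.Basis.ofEquivFun (finDiffEquiv n)
  have hspan : Submodule.span ℤ (Set.range b) =
      Submodule.span ℤ (Set.range (Pi.basisFun ℝ _)) := by
    ext s
    rw [Module.Basis.mem_span_iff_repr_mem, Module.Basis.mem_span_iff_repr_mem]
    simpa [b] using forall_finDiff_mem_range_intCast_iff s
  have hdom : ZSpan.fundamentalDomain b = finDiff n ⁻¹' unitCube _ := by
    ext s
    simp [b, mem_unitCube]
  rw [intLattice, ← hspan, ← hdom]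
  exact ZSpan.isAddFundamentalDomain' b volume

theorem volume_preimage_finDiff (n : ℕ) (Y : Set (Fin (n + 1) → ℝ)) :
    volume (finDiff n ⁻¹' Y) = volume Y := by
  have h := Measure.addHaar_preimage_linearEquiv volume (finDiffEquiv n) Y
  -- both fundamental domains of the integer lattice have volume one, so `|det finDiff| = 1`
  have hdet :
      ENNReal.ofReal |LinearMap.det ((finDiffEquiv n).symm : (Fin (n + 1) → ℝ) →ₗ[ℝ] _)| = 1 := by
    have := Measure.addHaar_preimage_linearEquiv volume (finDiffEquiv n) (unitCube _)
    rwa [coe_finDiffEquiv, volume_unitCube, mul_one, ← (isAddFundamentalDomain_unitCube _).measure_eq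
      (isAddFundamentalDomain_finDiff_preimage_unitCube n), volume_unitCube, eq_comm] at this
  rw [← coe_finDiffEquiv, h, hdet, one_mul]

theorem floor_last_eq_descentCount_fract {s : Fin (n + 1) → ℝ}
    (hs : ∀ i, finDiff n s i ∈ Set.Ico 0 1) :
    ⌊s (Fin.last n)⌋ = descentCount fun i => Int.fract (s i) := by
  have h0 : ⌊s 0⌋ = 0 := Int.floor_eq_zero_iff.2 (hs 0)
  have hstep (j : Fin n) : ⌊s j.succ⌋ - ⌊s j.castSucc⌋ =
      if Int.fract (s j.succ) < Int.fract (s j.castSucc) then 1 else 0 :=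
    Int.floor_sub_floor_eq_ite (by simpa using hs j.succ)
  calc ⌊s (Fin.last n)⌋ = ∑ j : Fin n, (⌊s j.succ⌋ - ⌊s j.castSucc⌋) := by
        rw [Fin.sum_succ_sub_castSucc (fun i => ⌊s i⌋), h0, sub_zero]
    _ = _ := by
      rw [Finset.sum_congr rfl fun j _ => hstep j, descentCount_eq_card_succ_lt_castSucc,
        ← Finset.sum_boole]

end Differences

def fractDescentsEq (d m : ℕ) : Set (Fin d → ℝ) :=
  {s | descentCount (fun i => Int.fract (s i)) = m}

theorem measurableSet_fractDescentsEq (d m : ℕ) : MeasurableSet (fractDescentsEq d m) :=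
  (measurable_descentCount.comp (measurable_pi_lambda _ fun i =>
    measurable_fract.comp (measurable_pi_apply i))) (measurableSet_singleton m)

theorem vadd_preimage_fractDescentsEq (d m : ℕ) (g : intLattice (Fin d)) :
    (g +ᵥ ·) ⁻¹' fractDescentsEq d m = fractDescentsEq d m := by
  have hg : ∀ i, ∃ z : ℤ, (z : ℝ) = (g : Fin d → ℝ) i := by
    simpa using (Module.Basis.mem_span_iff_repr_mem ℤ (Pi.basisFun ℝ (Fin d)) g).1 g.2
  ext s
  have hfract : (fun i => Int.fract ((g : Fin d → ℝ) i + s i)) = fun i => Int.fract (s i) := by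
    ext i
    obtain ⟨z, hz⟩ := hg i
    rw [← hz, Int.fract_intCast_add]
  simp [fractDescentsEq, AddSubgroup.vadd_def, hfract]

theorem finDiff_preimage_setOf_floor_sum (n m : ℕ) :
    finDiff n ⁻¹' {y | y ∈ unitCube _ ∧ ⌊∑ i, y i⌋ = m} =
      fractDescentsEq (n + 1) m ∩ finDiff n ⁻¹' unitCube _ := by
  ext s
  simp only [Set.mem_preimage, Set.mem_inter_iff, fractDescentsEq, Set.mem_ofPred_eq]
  refine and_comm.trans (and_congr_left fun hs => ?_)
  rw [sum_finDiff, floor_last_eq_descentCount_fract (mem_unitCube.1 hs), Nat.cast_inj]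

theorem volume_unitCube_inter_floor_sum (n m : ℕ) :
    volume {y | y ∈ unitCube (Fin (n + 1)) ∧ ⌊∑ i, y i⌋ = m} =
      volume {x | x ∈ unitCube (Fin (n + 1)) ∧ descentCount x = m} := by
  rw [← volume_preimage_finDiff, finDiff_preimage_setOf_floor_sum,
    (isAddFundamentalDomain_finDiff_preimage_unitCube n).measure_set_eq
      (isAddFundamentalDomain_unitCube _) (measurableSet_fractDescentsEq _ _)
      (vadd_preimage_fractDescentsEq _ _)]
  congr 1
  ext x
  simp only [fractDescentsEq, Set.mem_inter_iff, Set.mem_ofPred_eq]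
  refine and_comm.trans (and_congr_right fun hx => ?_)
  simp only [fun i => Int.fract_eq_self.2 (mem_unitCube.1 hx i)]

section OrderCells

variable {d : ℕ}

def orderCell (σ : Equiv.Perm (Fin d)) : Set (Fin d → ℝ) :=
  {x | x ∈ unitCube (Fin d) ∧ StrictMono (x ∘ σ.symm)}

theorem measurableSet_orderCell (σ : Equiv.Perm (Fin d)) : MeasurableSet (orderCell σ) := by
  have h : orderCell σ = unitCube (Fin d) ∩
      ⋂ (a) (b) (_ : a < b), {x | x (σ.symm a) < x (σ.symm b)} := by
    ext; simp [orderCell, StrictMono]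
  rw [h]
  exact (MeasurableSet.univ_pi fun _ => measurableSet_Ico).inter <|
    .iInter fun _ => .iInter fun _ => .iInter fun _ =>
      measurableSet_lt (measurable_pi_apply _) (measurable_pi_apply _)

theorem descentCount_of_mem_orderCell {σ : Equiv.Perm (Fin d)} {x : Fin d → ℝ}
    (hx : x ∈ orderCell σ) : descentCount x = descents σ :=
  descentCount_congr fun i j => by simpa using hx.2.lt_iff_lt (a := σ i) (b := σ j)

theorem pairwise_disjoint_orderCell :
    Pairwise fun σ τ : Equiv.Perm (Fin d) => Disjoint (orderCell σ) (orderCell τ) := by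
  intro σ τ hne
  refine Set.disjoint_left.2 fun x hσ hτ => hne ?_
  have hinj : Function.Injective x := by
    simpa [Function.comp_def] using hσ.2.injective.comp σ.injective
  have hrange : Set.range (x ∘ σ.symm) = Set.range (x ∘ τ.symm) := by
    rw [Set.range_comp, Set.range_comp, σ.symm.range_eq_univ, τ.symm.range_eq_univ]
  have := hinj.comp_left ((hσ.2.range_inj hτ.2).1 hrange)
  simpa using congrArg Equiv.symm (Equiv.ext (congrFun this))

theorem exists_mem_orderCell {x : Fin d → ℝ} (hx : x ∈ unitCube (Fin d))
    (hinj : Function.Injective x) : ∃ σ, x ∈ orderCell σ :=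
  ⟨(Tuple.sort x).symm, hx, by
    simpa using (Tuple.monotone_sort x).strictMono_of_injective
      (hinj.comp (Tuple.sort x).injective)⟩

theorem volume_orderCell (σ : Equiv.Perm (Fin d)) :
    volume (orderCell σ) = volume (orderCell (1 : Equiv.Perm (Fin d))) := by
  have hσ : orderCell σ =
      MeasurableEquiv.arrowCongr' σ (MeasurableEquiv.refl ℝ) ⁻¹' orderCell 1 := by
    ext x
    change _ ↔ x ∘ σ.symm ∈ orderCell 1
    simp [orderCell, mem_unitCube, pull_end,
      σ.symm.forall_congr_right (q := fun i => 0 ≤ x i ∧ x i < 1)]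
  rw [hσ, (volume_preserving_arrowCongr' _ _ (MeasurePreserving.id volume)).measure_preimage_equiv]

theorem volume_biUnion_orderCell (T : Finset (Equiv.Perm (Fin d))) :
    volume (⋃ σ ∈ T, orderCell σ) = T.card * volume (orderCell (1 : Equiv.Perm (Fin d))) := by
  rw [measure_biUnion_finset (fun σ _ τ _ h => pairwise_disjoint_orderCell h)
    fun σ _ => measurableSet_orderCell σ]
  simp [volume_orderCell]

theorem volume_unitCube_inter_descentCount (P : ℕ → Prop) [DecidablePred P] :
    volume {x | x ∈ unitCube (Fin d) ∧ P (descentCount x)} =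
      (Finset.univ.filter fun σ : Equiv.Perm (Fin d) => P (descents σ)).card *
        volume (orderCell (1 : Equiv.Perm (Fin d))) := by
  rw [← volume_biUnion_orderCell]
  refine le_antisymm (measure_mono_ae (ae_le_set.2 (measure_mono_null ?_
    volume_setOf_not_injective))) (measure_mono ?_)
  · rintro x ⟨⟨hx, hP⟩, hnot⟩ hinj
    obtain ⟨σ, hσ⟩ := exists_mem_orderCell hx hinj
    refine hnot (Set.mem_biUnion (x := σ) ?_ hσ)
    simpa [← descentCount_of_mem_orderCell hσ] using hP
  · simp only [Set.iUnion_subset_iff]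
    intro σ hσ x hx
    refine ⟨hx.1, ?_⟩
    rw [descentCount_of_mem_orderCell hx]
    simpa using hσ

theorem factorial_mul_volume_orderCell_one :
    (d.factorial : ℝ≥0∞) * volume (orderCell (1 : Equiv.Perm (Fin d))) = 1 := by
  have := volume_unitCube_inter_descentCount (d := d) fun _ => True
  simpa [volume_unitCube, Fintype.card_perm] using this.symm

end OrderCells

theorem volume_slice_eq_volume_unitCube_inter_floor_sum {ι : Type*} [Fintype ι] [Nonempty ι]
    (m : ℤ) :
    volume {x : ι → ℝ | (∀ i, x i ∈ Set.Icc 0 1) ∧ (m : ℝ) ≤ ∑ i, x i ∧ ∑ i, x i ≤ m + 1} =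
      volume {y | y ∈ unitCube ι ∧ ⌊∑ i, y i⌋ = m} := by
  refine le_antisymm (measure_mono_ae (ae_le_set.2 (measure_mono_null ?_
    (measure_union_null (volume_setOf_sum_eq (m + 1 : ℝ))
      (measure_iUnion_null fun i => volume_setOf_apply_eq i 1))))) (measure_mono ?_)
  · rintro x ⟨⟨hx, hlo, hhi⟩, hnot⟩
    by_contra hN
    simp only [Set.mem_union, Set.mem_ofPred_eq, Set.mem_iUnion, not_or, not_exists] at hN
    refine hnot ⟨mem_unitCube.2 fun i => ⟨(hx i).1, lt_of_le_of_ne (hx i).2 (hN.2 i)⟩, ?_⟩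
    exact Int.floor_eq_iff.2 ⟨hlo, lt_of_le_of_ne hhi hN.1⟩
  · rintro y ⟨hy, hfloor⟩
    obtain ⟨hlo, hhi⟩ := Int.floor_eq_iff.1 hfloor
    exact ⟨fun i => Set.Ico_subset_Icc_self (mem_unitCube.1 hy i), hlo, hhi.le⟩

theorem eulerian_eq_slice_volume_general (d k : ℕ) (hd : 1 ≤ d) (hk1 : 1 ≤ k) :
    (eulerian d k : ℝ≥0∞) = (Nat.factorial d : ℝ≥0∞) *
      volume {x : Fin d → ℝ | (∀ i, x i ∈ Set.Icc (0 : ℝ) 1) ∧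
        (k : ℝ) - 1 ≤ ∑ i, x i ∧ ∑ i, x i ≤ (k : ℝ)} := by
  obtain ⟨n, rfl⟩ := Nat.exists_eq_add_of_le' hd
  obtain ⟨m, rfl⟩ := Nat.exists_eq_add_of_le' hk1
  have hslice := volume_slice_eq_volume_unitCube_inter_floor_sum (ι := Fin (n + 1)) m
  push_cast at hslice ⊢
  rw [add_sub_cancel_right, hslice, volume_unitCube_inter_floor_sum,
    volume_unitCube_inter_descentCount (· = m), mul_left_comm,
    factorial_mul_volume_orderCell_one, mul_one]
  rfl

theorem eulerian_eq_slice_volume (d k : ℕ) (hd : 1 ≤ d) (hk1 : 1 ≤ k) (hkd : k ≤ d) :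
    (eulerian d k : ℝ≥0∞) = (Nat.factorial d : ℝ≥0∞) *
      volume {x : Fin d → ℝ | (∀ i, x i ∈ Set.Icc (0 : ℝ) 1) ∧
        (k : ℝ) - 1 ≤ ∑ i, x i ∧ ∑ i, x i ≤ (k : ℝ)} :=
  eulerian_eq_slice_volume_general d k hd hk1
end

section
/- For all integers d ≥ 1, n ≥ 1 and 0 ≤ k ≤ d, D(d,n,k) = Σ_{i=0}^{k} (-1)^i · C(d+1,i) · (n(k-i)+1)^d, where D(d,n,k) := d! · n^d · B_{d+1}(k + 1/n). -/
/-!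
Writing `y₊^m` for the truncated power (with `y₊^0` the indicator of `y ≥ 0`), one has
`d! · B_{d+1}(x) = ∑_{i ≤ d+1} (-1)^i C(d+1,i) (x - i)₊^d`: for `d = 0` this is the indicator of
`[0,1)`, and integrating over a unit interval turns `(· - i)₊^d` into a difference of
`(· - i)₊^{d+1} / (d+1)`, which Pascal's rule folds back into the same shape one degree higher.
At `x = k + 1/n` with `k ≤ d` and `n ≥ 1`, the terms with `i > k` have argument `≤ 0`, so vanish
as `d ≥ 1`, and the others are `((k - i) + 1/n)^d`; multiplying by `n^d` gives the formula.
-/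

open MeasureTheory

open Set Finset

noncomputable def truncPow (m : ℕ) (y : ℝ) : ℝ := if 0 ≤ y then y ^ m else 0

namespace truncPow

lemma of_nonneg {m : ℕ} {y : ℝ} (hy : 0 ≤ y) : truncPow m y = y ^ m := if_pos hy

lemma of_neg {m : ℕ} {y : ℝ} (hy : y < 0) : truncPow m y = 0 := if_neg hy.not_ge

lemma of_nonpos {m : ℕ} (hm : m ≠ 0) {y : ℝ} (hy : y ≤ 0) : truncPow m y = 0 := by
  unfold truncPow
  split_ifs with h
  · rw [le_antisymm hy h, zero_pow hm]
  · rfl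

lemma monotone (m : ℕ) : Monotone (truncPow m) := by
  intro a b hab
  unfold truncPow
  split_ifs with ha hb hb
  · exact pow_le_pow_left₀ ha hab m
  · exact absurd (ha.trans hab) hb
  · exact pow_nonneg hb m
  · exact le_rfl

lemma eq_max_pow {m : ℕ} (hm : m ≠ 0) : truncPow m = fun y => max y 0 ^ m := by
  funext y
  rcases le_total 0 y with hy | hy
  · rw [of_nonneg hy, max_eq_left hy]
  · rw [of_nonpos hm hy, max_eq_right hy, zero_pow hm]

lemma continuous_succ (m : ℕ) : Continuous (truncPow (m + 1)) := by
  rw [eq_max_pow m.succ_ne_zero]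
  fun_prop

/-- Only a right derivative: `truncPow 1 = max · 0` has a corner at `0`. -/
lemma hasDerivWithinAt_succ (m : ℕ) (y : ℝ) :
    HasDerivWithinAt (truncPow (m + 1)) ((m + 1) * truncPow m y) (Ici y) y := by
  rcases lt_or_ge y 0 with hy | hy
  · have hzero : truncPow (m + 1) =ᶠ[nhds y] fun _ => 0 := by
      filter_upwards [Iio_mem_nhds hy] with z hz
      exact of_neg hz
    rw [of_neg hy, mul_zero]
    exact ((hasDerivAt_const y 0).congr_of_eventuallyEq hzero).hasDerivWithinAt
  · have hpow : HasDerivAt (fun z : ℝ => z ^ (m + 1)) ((m + 1) * y ^ m) y := by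
      simpa using hasDerivAt_pow (m + 1) y
    rw [of_nonneg hy]
    exact hpow.hasDerivWithinAt.congr (fun z hz => of_nonneg (hy.trans hz)) (of_nonneg hy)

lemma integral_eq_sub {m : ℕ} {a b : ℝ} (hab : a ≤ b) :
    (m + 1) * ∫ s in a..b, truncPow m s = truncPow (m + 1) b - truncPow (m + 1) a := by
  rw [← intervalIntegral.integral_const_mul]
  exact intervalIntegral.integral_eq_sub_of_hasDeriv_right_of_le hab
    (continuous_succ m).continuousOn
    (fun y _ => (hasDerivWithinAt_succ m y).mono Ioi_subset_Ici_self)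
    ((monotone m).intervalIntegrable.const_mul _)

lemma integral_comp_sub_unitInterval (m : ℕ) (c : ℝ) :
    (m + 1) * ∫ t in (0 : ℝ)..1, truncPow m (c - t) =
      truncPow (m + 1) c - truncPow (m + 1) (c - 1) := by
  rw [intervalIntegral.integral_comp_sub_left (truncPow m) c, sub_zero]
  exact integral_eq_sub (by linarith)

end truncPow

/-- Pascal's rule, in the form `∇^{N+1} f = ∇^N (f - f(· + 1))` for iterated differences. -/
lemma sum_alternating_choose_mul_sub {R : Type*} [CommRing R] (N : ℕ) (f : ℕ → R) :
    ∑ i ∈ range (N + 1), (-1) ^ i * (N.choose i : R) * (f i - f (i + 1)) =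
      ∑ i ∈ range (N + 2), (-1) ^ i * ((N + 1).choose i : R) * f i := by
  have hshift : ∑ i ∈ range (N + 1), (-1) ^ i * (N.choose i : R) * f i =
      ∑ i ∈ range (N + 1), (-1) ^ (i + 1) * (N.choose (i + 1) : R) * f (i + 1) + f 0 := by
    rw [sum_range_succ' _ N, sum_range_succ _ N]
    simp
  have hterm : ∀ i, (-1) ^ (i + 1) * ((N + 1).choose (i + 1) : R) * f (i + 1) =
      (-1) ^ (i + 1) * (N.choose (i + 1) : R) * f (i + 1) -
        (-1) ^ i * (N.choose i : R) * f (i + 1) := by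
    intro i
    rw [Nat.choose_succ_succ', Nat.cast_add]
    ring
  rw [sum_range_succ' _ (N + 1)]
  simp only [hterm, sum_sub_distrib, mul_sub, hshift, pow_zero, Nat.choose_zero_right,
    Nat.cast_one, mul_one, one_mul]
  ring

open Nat in
lemma factorial_mul_B_succ (d : ℕ) (x : ℝ) :
    (d ! : ℝ) * B (d + 1) x =
      ∑ i ∈ range (d + 2), (-1) ^ i * ((d + 1).choose i : ℝ) * truncPow d (x - i) := by
  induction d generalizing x with
  | zero =>
    simp only [B, truncPow, sum_range_succ, Finset.range_one, sum_singleton, Nat.cast_zero,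
      Nat.cast_one, sub_zero]
    split_ifs <;> norm_num <;> grind
  | succ d ih =>
    have hintegrable : ∀ i : ℕ, IntervalIntegrable (fun t => truncPow d (x - i - t)) volume 0 1 :=
      fun i => ((truncPow.monotone d).comp_antitone fun _ _ h => by linarith).intervalIntegrable
    calc ((d + 1)! : ℝ) * B (d + 2) x
        = (d + 1) * ∫ t in (0 : ℝ)..1, (d ! : ℝ) * B (d + 1) (x - t) := by
          rw [B, factorial_succ, intervalIntegral.integral_const_mul]
          push_cast
          ring
      _ = (d + 1) * ∫ t in (0 : ℝ)..1,
            ∑ i ∈ range (d + 2), (-1) ^ i * ((d + 1).choose i : ℝ) * truncPow d (x - i - t) := by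
          simp only [ih, sub_right_comm]
      _ = ∑ i ∈ range (d + 2), (-1) ^ i * ((d + 1).choose i : ℝ) *
            ((d + 1) * ∫ t in (0 : ℝ)..1, truncPow d (x - i - t)) := by
          rw [intervalIntegral.integral_finsetSum fun i _ => (hintegrable i).const_mul _, mul_sum]
          refine sum_congr rfl fun i _ => ?_
          rw [intervalIntegral.integral_const_mul]
          ring
      _ = ∑ i ∈ range (d + 2), (-1) ^ i * ((d + 1).choose i : ℝ) *
            (truncPow (d + 1) (x - i) - truncPow (d + 1) (x - ↑(i + 1))) := by
          refine sum_congr rfl fun i _ => ?_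
          rw [truncPow.integral_comp_sub_unitInterval, Nat.cast_succ, sub_add_eq_sub_sub]
      _ = _ := sum_alternating_choose_mul_sub (d + 1) fun i => truncPow (d + 1) (x - i)

theorem bspline_descent_poly_formula (d n k : ℕ) (hd : 1 ≤ d) (hn : 1 ≤ n) (hk : k ≤ d) :
    (Nat.factorial d : ℝ) * (n : ℝ) ^ d * B (d + 1) ((k : ℝ) + 1 / n) =
      ∑ i ∈ Finset.range (k + 1),
        (-1 : ℝ) ^ i * ((d + 1).choose i : ℝ) * ((n : ℝ) * ((k : ℝ) - i) + 1) ^ d := by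
  have hn₀ : (0 : ℝ) < n := by exact_mod_cast hn
  have hinv : 1 / (n : ℝ) ≤ 1 := by rw [div_le_one hn₀]; exact_mod_cast hn
  have hinv₀ : 0 < 1 / (n : ℝ) := by positivity
  have hvanish : ∀ i ∈ range (d + 2), i ∉ range (k + 1) →
      (n : ℝ) ^ d * ((-1) ^ i * ((d + 1).choose i : ℝ) * truncPow d (k + 1 / n - i)) = 0 := by
    intro i _ hi
    have hki : (k : ℝ) + 1 ≤ i := by exact_mod_cast not_lt.mp (mem_range.not.mp hi)
    rw [truncPow.of_nonpos (by omega) (by linarith), mul_zero, mul_zero]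
  rw [mul_comm _ ((n : ℝ) ^ d), mul_assoc, factorial_mul_B_succ, mul_sum,
    ← sum_subset (range_subset_range.mpr (by omega)) hvanish]
  refine sum_congr rfl fun i hi => ?_
  have hik : (i : ℝ) ≤ k := by exact_mod_cast Nat.lt_succ_iff.mp (mem_range.mp hi)
  rw [truncPow.of_nonneg (by linarith), mul_left_comm, ← mul_pow]
  congr 2
  field_simp
  ring
end

section
/- For each fixed d ≥ 1 and n ≥ 1, the sequence D(d,n,k) for k = 0, 1, ..., d is log-concave: D(d,n,k)^2 ≥ D(d,n,k-1)·D(d,n,k+1) for all 1 ≤ k ≤ d-1. -/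
/-!
Pascal's rule and the absorption identity give the recurrence
`D(d+1, k+1) = (n(k+1)+1) D(d, k+1) + (n(d-k)+n-1) D(d, k)`, whose coefficients are nonnegative
for `k ≤ d`. A recurrence of this shape preserves, for nonnegative sequences, the condition
`a k * a (l+2) ≤ a (k+1) * a (l+1)` for all `k ≤ l`; its case `k = l` is log-concavity.
Induction on `d`, starting from `D(0, ·) = (1, 0, 0, …)`, proves it for every `d`.
-/

/-- The descent polynomial coefficient `D(d,n,k)` of indexed permutations,
via its explicit alternating-sum formula. -/
noncomputable def D (d n k : ℕ) : ℝ :=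
  ∑ i ∈ Finset.range (k + 1),
    (-1 : ℝ) ^ i * ((d + 1).choose i : ℝ) * ((n : ℝ) * ((k : ℝ) - i) + 1) ^ d

theorem Nat.cast_choose_succ_mul {R : Type*} [CommRing R] (m i : ℕ) :
    (m.choose (i + 1) : R) * (i + 1) = m.choose i * (m - i) := by
  rcases le_or_gt i m with h | h
  · exact_mod_cast congrArg (Nat.cast (R := R)) (Nat.choose_succ_right_eq m i) |>.trans
      (by push_cast [h]; ring)
  · simp [Nat.choose_eq_zero_of_lt h, Nat.choose_eq_zero_of_lt (Nat.lt_succ_of_lt h)]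

theorem D_succ_succ (d n k : ℕ) :
    D (d + 1) n (k + 1) =
      (n * (k + 1) + 1) * D d n (k + 1) + (n * (d - k) + n - 1) * D d n k := by
  have term (i : ℕ) :
      (-1 : ℝ) ^ (i + 1) * ((d + 1 + 1).choose (i + 1) : ℝ) *
          (n * ((k + 1 : ℕ) - (i + 1 : ℕ) : ℝ) + 1) ^ (d + 1) =
        (n * (k + 1) + 1) * ((-1 : ℝ) ^ (i + 1) * ((d + 1).choose (i + 1) : ℝ) *
          (n * ((k + 1 : ℕ) - (i + 1 : ℕ) : ℝ) + 1) ^ d) +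
        (n * (d - k) + n - 1) *
          ((-1 : ℝ) ^ i * ((d + 1).choose i : ℝ) * (n * ((k : ℝ) - i) + 1) ^ d) := by
    have pascal :
        ((d + 1 + 1).choose (i + 1) : ℝ) = (d + 1).choose i + (d + 1).choose (i + 1) := by
      exact_mod_cast Nat.choose_succ_succ (d + 1) i
    have absorb := Nat.cast_choose_succ_mul (R := ℝ) (d + 1) i
    push_cast at absorb ⊢
    linear_combination ((-1 : ℝ) ^ i * (n * ((k : ℝ) - i) + 1) ^ d) *
      (n * absorb - (n * ((k : ℝ) - i) + 1) * pascal)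
  rw [D, D, D, Finset.sum_range_succ' _ (k + 1), Finset.sum_range_succ' _ (k + 1)]
  simp only [term, Finset.sum_add_distrib, ← Finset.mul_sum]
  push_cast [Nat.choose_zero_right]
  ring

theorem D_zero_right (d n : ℕ) : D d n 0 = 1 := by
  simp [D]

theorem D_eq_zero_of_lt {d k : ℕ} (n : ℕ) (h : d < k) : D d n k = 0 := by
  induction d generalizing k with
  | zero =>
    obtain ⟨k, rfl⟩ := Nat.exists_eq_add_of_lt h
    simp [D, Finset.sum_range_succ', Nat.choose_eq_zero_of_lt]
  | succ d ih =>
    obtain ⟨k, rfl⟩ := Nat.exists_eq_add_of_le' (Nat.one_le_of_lt h)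
    rw [D_succ_succ, ih (by omega), ih (by omega)]
    ring

theorem D_nonneg {n : ℕ} (hn : 1 ≤ n) (d k : ℕ) : 0 ≤ D d n k := by
  induction d generalizing k with
  | zero => rcases k with _ | k <;> simp [D_zero_right, D_eq_zero_of_lt]
  | succ d ih =>
    rcases k with _ | k
    · simp [D_zero_right]
    rcases lt_or_ge d k with hdk | hkd
    · exact (D_eq_zero_of_lt n (by omega)).ge
    have hcoeff : (0 : ℝ) ≤ n * (d - k) + n - 1 := by
      have : (k : ℝ) ≤ d := by exact_mod_cast hkd
      have : (1 : ℝ) ≤ n := by exact_mod_cast hn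
      nlinarith
    rw [D_succ_succ]
    exact add_nonneg (mul_nonneg (by positivity) (ih _)) (mul_nonneg hcoeff (ih _))

/-- With `a = D d n`, `(c, p, q) = (a (k-1), a k, a (k+1))`,
`(u, r, s) = (a l, a (l+1), a (l+2))`, `α = nk+1`, `β = nl+1`, `γ = n(d-k)+n-1`,
`δ = n(d-l)+n-1` and `N = n`, the two sides are `D (d+1) n k * D (d+1) n (l+2)` and
`D (d+1) n (k+1) * D (d+1) n (l+1)` expanded by `D_succ_succ`. -/
theorem two_term_mul_le_mul {N α β γ δ c p q u r s : ℝ} (hN : 0 ≤ N) (hα : 0 ≤ α)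
    (hαβ : α ≤ β) (hγ : γ - δ = β - α) (hδ : N ≤ δ) (hp : 0 ≤ p) (hq : 0 ≤ q) (hu : 0 ≤ u)
    (hr : 0 ≤ r) (hps : p * s ≤ q * r) (hcs : c * s ≤ p * r) (hcr : c * r ≤ p * u)
    (hpr : p * r ≤ q * u) :
    (α * p + (γ + N) * c) * ((β + 2 * N) * s + (δ - N) * r) ≤
      ((α + N) * q + γ * p) * ((β + N) * r + δ * u) := by
  obtain rfl : γ = δ + (β - α) := by linarith
  have amgm : 2 * (p * r) ≤ q * r + p * u := by
    refine two_mul_le_add_of_sq_le_mul (mul_nonneg hq hr) (mul_nonneg hp hu) ?_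
    calc (p * r) ^ 2 = p * r * (p * r) := sq _
      _ ≤ p * r * (q * u) := mul_le_mul_of_nonneg_left hpr (mul_nonneg hp hr)
      _ = q * r * (p * u) := by ring
  have hps_coeff : 0 ≤ α * (β + 2 * N) := by nlinarith
  have hcs_coeff : 0 ≤ (δ + (β - α) + N) * (β + 2 * N) := by nlinarith
  have hcr_coeff : 0 ≤ (δ + (β - α) + N) * (δ - N) := by nlinarith
  have hpr_coeff : 0 ≤ (α + N) * δ := by nlinarith
  have amgm_coeff : 0 ≤ N * (β - α) + N ^ 2 := by nlinarith
  linear_combination (α * (β + 2 * N)) * hps + ((δ + (β - α) + N) * (β + 2 * N)) * hcs +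
    ((δ + (β - α) + N) * (δ - N)) * hcr + ((α + N) * δ) * hpr + (N * (β - α) + N ^ 2) * amgm

theorem D_mul_le_mul {n : ℕ} (hn : 1 ≤ n) (d : ℕ) {k l : ℕ} (hkl : k ≤ l) :
    D d n k * D d n (l + 2) ≤ D d n (k + 1) * D d n (l + 1) := by
  induction d generalizing k l with
  | zero => simp [D_eq_zero_of_lt]
  | succ d ih =>
    rcases lt_or_ge d (l + 1) with hdl | hld
    · rw [D_eq_zero_of_lt n (by omega : d + 1 < l + 2), mul_zero]
      exact mul_nonneg (D_nonneg hn _ _) (D_nonneg hn _ _)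
    -- `c` is `D d n (k - 1)`, or `0` when `k = 0`
    obtain ⟨c, hc, hcs, hcr⟩ : ∃ c,
        D (d + 1) n k = (n * k + 1) * D d n k + (n * (d + 1 - k) + n - 1) * c ∧
        c * D d n (l + 2) ≤ D d n k * D d n (l + 1) ∧
        c * D d n (l + 1) ≤ D d n k * D d n l := by
      rcases k with _ | k
      · refine ⟨0, by simp [D_zero_right], ?_, ?_⟩ <;>
          simpa using mul_nonneg (D_nonneg hn _ _) (D_nonneg hn _ _)
      · refine ⟨D d n k, by rw [D_succ_succ]; push_cast; ring, ih (by omega), ?_⟩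
        obtain ⟨l, rfl⟩ := Nat.exists_eq_add_of_le' (Nat.one_le_of_lt hkl)
        exact ih (by omega)
    have hpr : D d n k * D d n (l + 1) ≤ D d n (k + 1) * D d n l := by
      rcases hkl.eq_or_lt with rfl | hlt
      · exact (mul_comm _ _).le
      obtain ⟨l, rfl⟩ := Nat.exists_eq_add_of_le' (Nat.one_le_of_lt hlt)
      exact ih (by omega)
    have hn' : (1 : ℝ) ≤ n := by exact_mod_cast hn
    have hkl' : (k : ℝ) ≤ l := by exact_mod_cast hkl
    have hld' : (l : ℝ) + 1 ≤ d := by exact_mod_cast hld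
    rw [hc, D_succ_succ d n k, D_succ_succ d n l, D_succ_succ d n (l + 1)]
    have := two_term_mul_le_mul (N := n) (α := n * k + 1) (β := n * l + 1)
      (γ := n * (d - k) + n - 1) (δ := n * (d - l) + n - 1) (by positivity) (by positivity)
      (by nlinarith) (by ring) (by nlinarith) (D_nonneg hn d k) (D_nonneg hn d (k + 1))
      (D_nonneg hn d l) (D_nonneg hn d (l + 1)) (ih hkl) hcs hcr hpr
    push_cast
    linear_combination this

theorem descent_poly_log_concave_general (d n k : ℕ) (hn : 1 ≤ n)
    (hk1 : 1 ≤ k) :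
    D d n (k - 1) * D d n (k + 1) ≤ D d n k ^ 2 := by
  obtain ⟨k, rfl⟩ := Nat.exists_eq_add_of_le' hk1
  simpa [sq] using D_mul_le_mul hn d (le_refl k)

theorem descent_poly_log_concave (d n k : ℕ) (hd : 1 ≤ d) (hn : 1 ≤ n)
    (hk1 : 1 ≤ k) (hkd : k ≤ d - 1) :
    D d n (k - 1) * D d n (k + 1) ≤ D d n k ^ 2 :=
  descent_poly_log_concave_general d n k hn hk1
end

section
/- For each fixed d ≥ 1, the sequence of Eulerian numbers A_{d,k}, k = 1, ..., d, is log-concave: A_{d,k}^2 ≥ A_{d,k-1}·A_{d,k+1} for 2 ≤ k ≤ d-1. -/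
open Finset

theorem List.idxOf_insertIdx_of_notMem {α : Type*} [DecidableEq α] {a : α} :
    ∀ {l : List α} {p : ℕ}, p ≤ l.length → a ∉ l → (l.insertIdx p a).idxOf a = p
  | _, 0, _, _ => by simp
  | [], _ + 1, hp, _ => by simp at hp
  | b :: t, q + 1, hp, ha => by
    rw [List.insertIdx_succ_cons, List.idxOf_cons_ne _ (by rintro rfl; exact ha List.mem_cons_self),
      List.idxOf_insertIdx_of_notMem (by simpa using hp) (fun h => ha (List.mem_cons_of_mem b h))]

lemma mul_le_mul_of_sq_le_of_sq_le {a b c e : ℕ} (hac : a * c ≤ b ^ 2) (hbe : b * e ≤ c ^ 2)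
    (hb : b ≠ 0) (hc : c ≠ 0) : a * e ≤ b * c := by
  refine Nat.le_of_mul_le_mul_right ?_ (Nat.pos_of_ne_zero (mul_ne_zero hb hc))
  calc a * e * (b * c) = a * c * (b * e) := by ring
    _ ≤ b ^ 2 * c ^ 2 := Nat.mul_le_mul hac hbe
    _ = b * c * (b * c) := by ring

/-- The difference of the two sides is
`x(x+2)(b₂² - b₁b₃) + y(y+2)(b₁² - b₀b₂) + (x+2)(y+2)(b₁b₂ - b₀b₃) + (b₂ - b₁)²`. -/
lemma eulerian_step_mul_le_sq {x y b₀ b₁ b₂ b₃ : ℕ} (h₀₂ : b₀ * b₂ ≤ b₁ ^ 2)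
    (h₁₃ : b₁ * b₃ ≤ b₂ ^ 2) (h₀₃ : b₀ * b₃ ≤ b₁ * b₂) :
    (x * b₁ + (y + 2) * b₀) * ((x + 2) * b₃ + y * b₂) ≤ ((x + 1) * b₂ + (y + 1) * b₁) ^ 2 := by
  have := Nat.mul_le_mul_left (x * (x + 2)) h₁₃
  have := Nat.mul_le_mul_left (y * (y + 2)) h₀₂
  have := Nat.mul_le_mul_left ((x + 2) * (y + 2)) h₀₃
  zify at *
  nlinarith [sq_nonneg ((b₂ : ℤ) - b₁)]

namespace Eulerian

def descCount : List ℕ → ℕ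
  | a :: b :: t => (if b < a then 1 else 0) + descCount (b :: t)
  | _ => 0

@[simp] lemma descCount_nil : descCount [] = 0 := rfl

@[simp] lemma descCount_singleton (a : ℕ) : descCount [a] = 0 := rfl

@[simp] lemma descCount_cons_cons (a b : ℕ) (t : List ℕ) :
    descCount (a :: b :: t) = (if b < a then 1 else 0) + descCount (b :: t) := rfl

lemma descCount_le : ∀ l : List ℕ, descCount l ≤ l.length - 1
  | [] | [_] => le_rfl
  | a :: b :: t => by
    have := descCount_le (b :: t)
    simp only [descCount_cons_cons, List.length_cons] at *
    split_ifs <;> omega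

lemma descCount_eq_sum : ∀ l : List ℕ,
    descCount l = ∑ i ∈ range (l.length - 1), if l.getD (i + 1) 0 < l.getD i 0 then 1 else 0
  | [] | [_] => rfl
  | a :: b :: t => by
    rw [descCount_cons_cons, descCount_eq_sum (b :: t)]
    simp only [List.length_cons, Nat.add_sub_cancel]
    rw [sum_range_succ', add_comm]
    simp only [List.getD_cons_succ, List.getD_cons_zero]

/-- Inserting a maximum at slot `p` of `l` (just before `l[p]`) creates no new descent exactly
when the slot is at the end or sits inside a descent `l[p-1] > l[p]`. -/
def KeepsDescents (l : List ℕ) (p : ℕ) : Prop :=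
  p = l.length ∨ (0 < p ∧ l.getD p 0 < l.getD (p - 1) 0)

instance (l : List ℕ) (p : ℕ) : Decidable (KeepsDescents l p) := by
  unfold KeepsDescents; infer_instance

lemma descCount_insertIdx {m : ℕ} : ∀ {l : List ℕ} {p : ℕ}, p ≤ l.length → (∀ x ∈ l, x < m) →
    descCount (l.insertIdx p m) = descCount l + if KeepsDescents l p then 0 else 1
  | [], 0, _, _ => by simp [KeepsDescents]
  | [], _ + 1, hp, _ => by simp at hp
  | a :: t, 0, _, hm => by simp [KeepsDescents, hm a, add_comm]
  | [a], 1, _, hm => by simp [KeepsDescents, (hm a (by simp)).not_gt]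
  | [_], _ + 2, hp, _ => by simp at hp
  | a :: b :: s, 1, _, hm => by
    have hbm := hm b (by simp)
    have hma := (hm a (by simp)).not_gt
    simp only [List.insertIdx_succ_cons, List.insertIdx_zero, descCount_cons_cons, KeepsDescents,
      List.length_cons, List.getD_cons_succ, List.getD_cons_zero, Nat.sub_self]
    split_ifs <;> omega
  | a :: b :: s, q + 2, hp, hm => by
    have ih := descCount_insertIdx (l := b :: s) (p := q + 1) (by simpa using hp)
      (fun x hx => hm x (List.mem_cons_of_mem a hx))
    have hkeeps : KeepsDescents (a :: b :: s) (q + 2) ↔ KeepsDescents (b :: s) (q + 1) := by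
      simp [KeepsDescents]
    rw [List.insertIdx_succ_cons, List.insertIdx_succ_cons, descCount_cons_cons,
      ← List.insertIdx_succ_cons, ih, descCount_cons_cons, if_congr hkeeps rfl rfl]
    omega

lemma card_filter_keepsDescents (l : List ℕ) :
    #{p ∈ range (l.length + 1) | KeepsDescents l p} = descCount l + 1 := by
  have hend : KeepsDescents l l.length := Or.inl rfl
  rw [range_add_one, filter_insert, if_pos hend, card_insert_of_notMem (by simp)]
  congr 1
  have hinner : {p ∈ range l.length | KeepsDescents l p}
      = {p ∈ range l.length | 0 < p ∧ l.getD p 0 < l.getD (p - 1) 0} :=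
    filter_congr fun p hp => or_iff_right (mem_range.mp hp).ne
  rw [hinner, card_filter, descCount_eq_sum]
  cases l with
  | nil => rfl
  | cons a t =>
    simp only [List.length_cons, Nat.add_sub_cancel, sum_range_succ', lt_irrefl, false_and,
      if_false, add_zero, Nat.zero_lt_succ, true_and]

lemma card_filter_descCount_insertIdx {m : ℕ} {l : List ℕ} (hm : ∀ x ∈ l, x < m) (j : ℕ) :
    #{p ∈ range (l.length + 1) | descCount (l.insertIdx p m) = j}
      = (if descCount l = j then j + 1 else 0)
        + (if descCount l + 1 = j then l.length - descCount l else 0) := by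
  have hcount : ∀ p ∈ range (l.length + 1), descCount (l.insertIdx p m) = j ↔
      (KeepsDescents l p ∧ descCount l = j) ∨ (¬ KeepsDescents l p ∧ descCount l + 1 = j) := by
    intro p hp
    rw [descCount_insertIdx (Nat.lt_succ_iff.mp (mem_range.mp hp)) hm]
    split_ifs <;> simp [*]
  rw [filter_congr hcount]
  have hkeep := card_filter_keepsDescents l
  by_cases h₀ : descCount l = j
  · subst h₀
    simp [hkeep]
  by_cases h₁ : descCount l + 1 = j
  · simp only [h₀, h₁, and_false, and_true, false_or, if_true, if_false, zero_add, filter_not,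
      card_sdiff_of_subset (filter_subset _ _), hkeep, card_range]
    omega
  · simp [h₀, h₁]

def word {d : ℕ} (σ : Equiv.Perm (Fin d)) : List ℕ := List.ofFn fun i => (σ i : ℕ)

lemma word_injective (d : ℕ) : Function.Injective (word (d := d)) := fun _ _ h =>
  Equiv.ext fun i => Fin.ext (congrFun (List.ofFn_injective h) i)

@[simp] lemma length_word {d : ℕ} (σ : Equiv.Perm (Fin d)) : (word σ).length = d := by
  simp [word]

lemma getD_word {d i : ℕ} (σ : Equiv.Perm (Fin d)) (h : i < d) :
    (word σ).getD i 0 = σ ⟨i, h⟩ := by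
  simp [word, h]

lemma descents_eq_descCount_word {d : ℕ} (σ : Equiv.Perm (Fin d)) :
    descents σ = descCount (word σ) := by
  let g : ℕ → ℕ := fun i =>
    if h : i + 1 < d then (if (word σ).getD (i + 1) 0 < (word σ).getD i 0 then 1 else 0) else 0
  have hterm : ∀ i : Fin d,
      (if (if h : (i : ℕ) + 1 < d then σ ⟨i + 1, h⟩ < σ i else False) then 1 else 0) = g i := by
    intro i
    by_cases h : (i : ℕ) + 1 < d
    · simp only [g, dif_pos h, getD_word σ h, getD_word σ i.isLt, Fin.eta, Fin.lt_def]
    · simp only [g, dif_neg h, if_false]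
  rw [descents, card_filter, sum_congr rfl fun i _ => hterm i, Fin.sum_univ_eq_sum_range g,
    descCount_eq_sum, length_word]
  cases d with
  | zero => rfl
  | succ n =>
    rw [sum_range_succ, Nat.add_sub_cancel]
    simp only [g, dif_neg (lt_irrefl _), add_zero]
    exact sum_congr rfl fun i hi => dif_pos (Nat.succ_lt_succ (mem_range.mp hi))

lemma word_perm_range {d : ℕ} (σ : Equiv.Perm (Fin d)) : (word σ).Perm (List.range d) := by
  refine List.perm_of_nodup_nodup_toFinset_eq
    (List.nodup_ofFn.mpr fun i j h => σ.injective (Fin.val_injective h)) List.nodup_range ?_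
  ext x
  simp only [word, List.mem_toFinset, List.mem_ofFn, List.mem_range]
  exact ⟨by rintro ⟨i, rfl⟩; exact (σ i).isLt, fun hx => ⟨σ.symm ⟨x, hx⟩, by simp⟩⟩

lemma exists_word_eq {d : ℕ} {l : List ℕ} (hl : l.Perm (List.range d)) :
    ∃ σ : Equiv.Perm (Fin d), word σ = l := by
  have hlen : l.length = d := by simpa using hl.length_eq
  have hlt : ∀ x ∈ l, x < d := fun x hx => List.mem_range.mp (hl.subset hx)
  let f : Fin d → Fin d := fun i => ⟨l[i.val], hlt _ (List.getElem_mem _)⟩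
  have hf : Function.Injective f := fun i j hij =>
    Fin.ext ((hl.nodup_iff.mpr List.nodup_range).getElem_inj_iff.mp (congrArg Fin.val hij))
  refine ⟨Equiv.ofBijective f (Finite.injective_iff_bijective.mp hf), ?_⟩
  exact List.ext_getElem (by simp [hlen]) fun i _ _ => by simp [word, f]

def permWords (d : ℕ) : Finset (List ℕ) := univ.image (word (d := d))

lemma mem_permWords {d : ℕ} {l : List ℕ} : l ∈ permWords d ↔ l.Perm (List.range d) := by
  simp only [permWords, mem_image, mem_univ, true_and]
  exact ⟨by rintro ⟨σ, rfl⟩; exact word_perm_range σ, exists_word_eq⟩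

lemma perm_range_succ_insertIdx {d p : ℕ} {l : List ℕ} (hl : l.Perm (List.range d)) (hp : p ≤ d) :
    (l.insertIdx p d).Perm (List.range (d + 1)) := by
  have hlen : p ≤ l.length := by simpa [hl.length_eq] using hp
  exact (List.perm_insertIdx d l hlen).trans
    ((hl.cons d).trans (by simpa [List.range_succ] using (List.perm_append_singleton d _).symm))

lemma permWords_succ (d : ℕ) : permWords (d + 1)
    = (permWords d ×ˢ range (d + 1)).image fun x => x.1.insertIdx x.2 d := by
  ext l
  simp only [mem_image, mem_product, mem_permWords, mem_range, Prod.exists]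
  constructor
  · intro hl
    have hd : d ∈ l := hl.mem_iff.mpr (List.mem_range.mpr d.lt_succ_self)
    have hidx : l.idxOf d < l.length := List.idxOf_lt_length_of_mem hd
    refine ⟨l.erase d, l.idxOf d, ⟨?_, by simpa [hl.length_eq] using hidx⟩, ?_⟩
    · simpa [List.erase_range] using hl.erase d
    · rw [List.erase_eq_eraseIdx_of_idxOf rfl]
      conv_rhs => rw [← List.insertIdx_eraseIdx_getElem hidx]
      rw [List.getElem_idxOf hidx]
  · rintro ⟨l', p, ⟨hl', hp⟩, rfl⟩
    exact perm_range_succ_insertIdx hl' (Nat.lt_succ_iff.mp hp)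

lemma injOn_insertIdx_permWords (d : ℕ) :
    Set.InjOn (fun x : List ℕ × ℕ => x.1.insertIdx x.2 d) ↑(permWords d ×ˢ range (d + 1)) := by
  rintro ⟨l₁, p₁⟩ h₁ ⟨l₂, p₂⟩ h₂ (heq : l₁.insertIdx p₁ d = l₂.insertIdx p₂ d)
  simp only [coe_product, Set.mem_prod, mem_coe, mem_permWords, mem_range] at h₁ h₂
  have hidx : ∀ {l : List ℕ} {p : ℕ}, l.Perm (List.range d) → p < d + 1 →
      (l.insertIdx p d).idxOf d = p := fun hl hp =>
    List.idxOf_insertIdx_of_notMem (by rw [hl.length_eq, List.length_range]; omega)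
      (fun h => by simpa using hl.subset h)
  have hp : p₁ = p₂ := by rw [← hidx h₁.1 h₁.2, ← hidx h₂.1 h₂.2, heq]
  subst hp
  rw [← List.eraseIdx_insertIdx_self (i := p₁) (a := d) (l := l₁), heq,
    List.eraseIdx_insertIdx_self]

/-- Permutations with `k` ascending runs. This agrees with `eulerian d k` for `k ≥ 1`, but
vanishes at `k = 0`, where the truncated `k - 1` makes `eulerian d 0 = eulerian d 1`. -/
def numPermsWithRuns (d k : ℕ) : ℕ := #{σ : Equiv.Perm (Fin d) | descents σ + 1 = k}

lemma numPermsWithRuns_eq_card_permWords (d k : ℕ) :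
    numPermsWithRuns d k = #{l ∈ permWords d | descCount l + 1 = k} := by
  rw [numPermsWithRuns, permWords, filter_image, card_image_of_injective _ (word_injective d)]
  simp only [descents_eq_descCount_word]

theorem numPermsWithRuns_succ_succ (d k : ℕ) : numPermsWithRuns (d + 1) (k + 1)
    = (k + 1) * numPermsWithRuns d (k + 1) + (d + 1 - k) * numPermsWithRuns d k := by
  simp only [numPermsWithRuns_eq_card_permWords, permWords_succ, filter_image,
    Nat.add_right_cancel_iff]
  rw [card_image_of_injOn ((injOn_insertIdx_permWords d).mono (coe_subset.mpr (filter_subset _ _))),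
    card_filter, sum_product]
  have hfiber : ∀ l ∈ permWords d,
      (∑ p ∈ range (d + 1), if descCount (l.insertIdx p d) = k then 1 else 0)
        = (if descCount l = k then k + 1 else 0)
          + (if descCount l + 1 = k then d + 1 - k else 0) := by
    intro l hl
    have hl := mem_permWords.mp hl
    have hcount :=
      card_filter_descCount_insertIdx (m := d) (fun x hx => by simpa using hl.subset hx) k
    rw [hl.length_eq, List.length_range] at hcount
    rw [← card_filter, hcount]
    split_ifs <;> omega
  rw [sum_congr rfl hfiber, sum_add_distrib, ← sum_filter, ← sum_filter, sum_const, sum_const,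
    smul_eq_mul, smul_eq_mul, mul_comm, card_filter, card_filter]
  ring

@[simp] lemma numPermsWithRuns_zero_right (d : ℕ) : numPermsWithRuns d 0 = 0 := by
  simp [numPermsWithRuns]

lemma numPermsWithRuns_eq_zero_of_lt {d k : ℕ} (h : max d 1 < k) : numPermsWithRuns d k = 0 := by
  refine card_eq_zero.mpr (filter_eq_empty_iff.mpr fun σ _ => ?_)
  have := descCount_le (word σ)
  rw [length_word, ← descents_eq_descCount_word] at this
  omega

lemma numPermsWithRuns_pos {d k : ℕ} (hk : 1 ≤ k) (hkd : k ≤ max d 1) :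
    0 < numPermsWithRuns d k := by
  induction d generalizing k with
  | zero =>
    obtain rfl : k = 1 := by omega
    decide
  | succ d ih =>
    obtain ⟨j, rfl⟩ : ∃ j, k = j + 1 := ⟨k - 1, by omega⟩
    rw [numPermsWithRuns_succ_succ]
    rcases Nat.eq_zero_or_pos j with rfl | hj
    · exact Nat.add_pos_left (by simpa using ih le_rfl (by omega)) _
    · exact Nat.add_pos_right _ (Nat.mul_pos (by omega) (ih hj (by omega)))

lemma numPermsWithRuns_ne_zero_iff {d k : ℕ} :
    numPermsWithRuns d k ≠ 0 ↔ 1 ≤ k ∧ k ≤ max d 1 := by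
  refine ⟨fun h => ⟨?_, ?_⟩, fun h => (numPermsWithRuns_pos h.1 h.2).ne'⟩
  · by_contra! hk
    exact h (by simp [Nat.lt_one_iff.mp hk])
  · by_contra! hk
    exact h (numPermsWithRuns_eq_zero_of_lt hk)

lemma numPermsWithRuns_mul_le_mul {d : ℕ}
    (hlc : ∀ k, numPermsWithRuns d k * numPermsWithRuns d (k + 2) ≤ numPermsWithRuns d (k + 1) ^ 2)
    (m : ℕ) : numPermsWithRuns d m * numPermsWithRuns d (m + 3)
      ≤ numPermsWithRuns d (m + 1) * numPermsWithRuns d (m + 2) := by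
  by_cases hends : numPermsWithRuns d m ≠ 0 ∧ numPermsWithRuns d (m + 3) ≠ 0
  · simp only [numPermsWithRuns_ne_zero_iff] at hends
    exact mul_le_mul_of_sq_le_of_sq_le (hlc m) (hlc (m + 1))
      (numPermsWithRuns_ne_zero_iff.mpr (by omega)) (numPermsWithRuns_ne_zero_iff.mpr (by omega))
  · rcases not_and_or.mp hends with h | h <;> simp [not_not.mp h]

theorem numPermsWithRuns_log_concave (d k : ℕ) :
    numPermsWithRuns d k * numPermsWithRuns d (k + 2) ≤ numPermsWithRuns d (k + 1) ^ 2 := by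
  induction d generalizing k with
  | zero =>
    rcases k with _ | k
    · simp
    · simp [numPermsWithRuns_eq_zero_of_lt (by omega : max 0 1 < k + 1 + 2)]
  | succ d ih =>
    rcases k with _ | m
    · simp
    by_cases hm : d ≤ m
    · simp [numPermsWithRuns_eq_zero_of_lt (by omega : max (d + 1) 1 < m + 1 + 2)]
    obtain ⟨y, rfl⟩ : ∃ y, d = m + 1 + y := ⟨d - (m + 1), by omega⟩
    rw [numPermsWithRuns_succ_succ, numPermsWithRuns_succ_succ _ (m + 1),
      numPermsWithRuns_succ_succ _ (m + 2), show m + 1 + y + 1 - m = y + 2 by omega,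
      show m + 1 + y + 1 - (m + 1) = y + 1 by omega,
      show m + 1 + y + 1 - (m + 2) = y by omega]
    exact eulerian_step_mul_le_sq (ih m) (ih (m + 1)) (numPermsWithRuns_mul_le_mul ih m)

lemma eulerian_eq_numPermsWithRuns {d k : ℕ} (hk : 1 ≤ k) :
    eulerian d k = numPermsWithRuns d k :=
  congrArg card (filter_congr fun _ _ => by omega)

end Eulerian

theorem eulerian_log_concave_general (d k : ℕ) (hk1 : 2 ≤ k) :
    eulerian d (k - 1) * eulerian d (k + 1) ≤ eulerian d k ^ 2 := by
  obtain ⟨i, rfl⟩ : ∃ i, k = i + 1 + 1 := ⟨k - 2, by omega⟩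
  simp only [Eulerian.eulerian_eq_numPermsWithRuns (by omega : 1 ≤ i + 1),
    Eulerian.eulerian_eq_numPermsWithRuns (by omega : 1 ≤ i + 1 + 1),
    Eulerian.eulerian_eq_numPermsWithRuns (by omega : 1 ≤ i + 1 + 1 + 1), Nat.add_sub_cancel]
  exact Eulerian.numPermsWithRuns_log_concave d (i + 1)

theorem eulerian_log_concave (d k : ℕ) (hd : 1 ≤ d) (hk1 : 2 ≤ k) (hkd : k ≤ d - 1) :
    eulerian d (k - 1) * eulerian d (k + 1) ≤ eulerian d k ^ 2 :=
  eulerian_log_concave_general d k hk1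
end

section
/- For all integers d ≥ 1, n ≥ 1 and all integers k, D(d,2n,k) = Σ_{j=0}^{d+1} C(d+1,j) · D(d,n,2k-j), where D(d,n,k) := d!·n^d·B_{d+1}(k + 1/n). -/
open MeasureTheory

/-!
`D(d,n,k) = d! n^d B_{d+1}(k + 1/n)`, so after cancelling `d! n^d` the identity is the two-scale
relation `2^d B_{d+1}(x) = ∑_j C(d+1,j) B_{d+1}(2x - j)` at `x = k + 1/(2n)`. The relation holds
for `B_1 = 1_{[0,1)}` by splitting `[0,1)` into halves, and passes from `d` to `d+1` because
`B_{d+2}` is the average of `B_{d+1}` over a unit window: integrating the relation for `d` over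
`t ∈ [0,1]` turns each `B_{d+1}(2x - j - 2t)` into `(B_{d+2}(2x - j) + B_{d+2}(2x - j - 1))/2`,
and Pascal's rule recombines the binomial weights.
-/

theorem Finset.sum_range_choose_mul_add {R : Type*} [CommSemiring R] (m : ℕ) (f : ℕ → R) :
    ∑ j ∈ range (m + 1), (m.choose j : R) * (f j + f (j + 1)) =
      ∑ j ∈ range (m + 2), ((m + 1).choose j : R) * f j := by
  have shifted : ∑ j ∈ range (m + 1), (m.choose (j + 1) : R) * f (j + 1) + f 0 =
      ∑ j ∈ range (m + 1), (m.choose j : R) * f j := by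
    rw [sum_range_succ (fun j => (m.choose (j + 1) : R) * f (j + 1)),
      sum_range_succ' (fun j => (m.choose j : R) * f j)]
    simp
  rw [sum_range_succ' (fun j => ((m + 1).choose j : R) * f j)]
  simp only [Nat.choose_succ_succ', Nat.cast_add, add_mul, sum_add_distrib, Nat.choose_zero_right,
    Nat.cast_one, one_mul, add_assoc, shifted, mul_add]
  exact add_comm _ _

namespace B

lemma succ_succ (d : ℕ) (x : ℝ) : B (d + 2) x = ∫ t in (0:ℝ)..1, B (d + 1) (x - t) := rfl

lemma one_eq_indicator : B 1 = Set.indicator (Set.Ico 0 1) 1 := by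
  funext x
  simp [B, Set.indicator, Set.mem_Ico]

lemma succ_succ_eq_integral (d : ℕ) (x : ℝ) : B (d + 2) x = ∫ s in (x - 1)..x, B (d + 1) s := by
  rw [succ_succ, intervalIntegral.integral_comp_sub_left, sub_zero]

lemma measurable : ∀ d, Measurable (B d)
  | 0 => measurable_const
  | 1 => one_eq_indicator ▸ measurable_one.indicator measurableSet_Ico
  | d + 2 => by
    have hprod : StronglyMeasurable fun p : ℝ × ℝ => B (d + 1) (p.1 - p.2) :=
      ((measurable (d + 1)).comp (measurable_fst.sub measurable_snd)).stronglyMeasurable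
    have : B (d + 2) = fun x => ∫ t in Set.Ioc (0:ℝ) 1, B (d + 1) (x - t) := by
      funext x
      rw [succ_succ, intervalIntegral.integral_of_le zero_le_one]
    exact this ▸ hprod.integral_prod_right.measurable

lemma abs_le_one : ∀ d x, |B d x| ≤ 1
  | 0, _ => by simp [B]
  | 1, x => by rw [one_eq_indicator]; by_cases hx : x ∈ Set.Ico (0:ℝ) 1 <;> simp [hx]
  | d + 2, x => by
    have h := intervalIntegral.norm_integral_le_of_norm_le_const (a := 0) (b := 1)
      (f := fun t => B (d + 1) (x - t)) fun t _ => abs_le_one (d + 1) (x - t)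
    exact h.trans_eq (by norm_num)

lemma intervalIntegrable_comp (d : ℕ) {g : ℝ → ℝ} (hg : Measurable g) (a b : ℝ) :
    IntervalIntegrable (fun t => B d (g t)) volume a b :=
  intervalIntegrable_const.mono_fun' ((measurable d).comp hg).aestronglyMeasurable
    (Filter.Eventually.of_forall fun t => abs_le_one d (g t))

lemma integral_sub_two_mul (d : ℕ) (y : ℝ) :
    ∫ t in (0:ℝ)..1, B (d + 1) (y - 2 * t) = (B (d + 2) y + B (d + 2) (y - 1)) / 2 := by
  have hint : ∀ a b : ℝ, IntervalIntegrable (B (d + 1)) volume a b :=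
    intervalIntegrable_comp (d + 1) measurable_id
  have split : (∫ s in (y - 2)..(y - 1), B (d + 1) s) + ∫ s in (y - 1)..y, B (d + 1) s =
      ∫ s in (y - 2)..y, B (d + 1) s :=
    intervalIntegral.integral_add_adjacent_intervals (hint _ _) (hint _ _)
  rw [intervalIntegral.integral_comp_sub_mul _ two_ne_zero, succ_succ_eq_integral,
    succ_succ_eq_integral, sub_sub, one_add_one_eq_two, mul_one, mul_zero, sub_zero, ← split,
    smul_eq_mul]
  ring

theorem two_scale_one (x : ℝ) : B 1 x = B 1 (2 * x) + B 1 (2 * x - 1) := by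
  simp only [B]
  split_ifs <;> grind

theorem two_scale (d : ℕ) (x : ℝ) :
    (2:ℝ) ^ d * B (d + 1) x =
      ∑ j ∈ Finset.range (d + 2), ((d + 1).choose j : ℝ) * B (d + 1) (2 * x - j) := by
  induction d generalizing x with
  | zero => simpa [Finset.sum_range_succ] using two_scale_one x
  | succ d ih =>
    calc (2:ℝ) ^ (d + 1) * B (d + 2) x
        = 2 * ∫ t in (0:ℝ)..1, (2:ℝ) ^ d * B (d + 1) (x - t) := by
          rw [succ_succ, intervalIntegral.integral_const_mul, pow_succ]; ring
      _ = 2 * ∫ t in (0:ℝ)..1, ∑ j ∈ Finset.range (d + 2),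
            ((d + 1).choose j : ℝ) * B (d + 1) ((2 * x - j) - 2 * t) := by
          simp only [ih, mul_sub, sub_right_comm]
      _ = 2 * ∑ j ∈ Finset.range (d + 2),
            ((d + 1).choose j : ℝ) * ∫ t in (0:ℝ)..1, B (d + 1) ((2 * x - j) - 2 * t) := by
          rw [intervalIntegral.integral_finsetSum fun j _ =>
            (intervalIntegrable_comp (d + 1) (by fun_prop) 0 1).const_mul _]
          simp only [intervalIntegral.integral_const_mul]
      _ = ∑ j ∈ Finset.range (d + 2), ((d + 1).choose j : ℝ) *
            (B (d + 2) (2 * x - j) + B (d + 2) (2 * x - ↑(j + 1))) := by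
          rw [Finset.mul_sum]
          refine Finset.sum_congr rfl fun j _ => ?_
          rw [integral_sub_two_mul, Nat.cast_succ, ← sub_sub]
          ring
      _ = ∑ j ∈ Finset.range (d + 3), ((d + 2).choose j : ℝ) * B (d + 2) (2 * x - j) :=
          Finset.sum_range_choose_mul_add (d + 1) fun j => B (d + 2) (2 * x - j)

end B

theorem descent_poly_two_scale_general (d n : ℕ) (k : ℤ) :
    (Nat.factorial d : ℝ) * ((2 * n : ℕ) : ℝ) ^ d * B (d + 1) ((k : ℝ) + 1 / (2 * n : ℕ)) =
      ∑ j ∈ Finset.range (d + 2), ((d + 1).choose j : ℝ) *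
        ((Nat.factorial d : ℝ) * (n : ℝ) ^ d * B (d + 1) (((2 * k - j : ℤ) : ℝ) + 1 / n)) := by
  have doubled_arg (j : ℕ) :
      2 * ((k : ℝ) + 1 / (2 * n : ℕ)) - j = ((2 * k - j : ℤ) : ℝ) + 1 / n := by
    push_cast
    ring
  calc _ = (Nat.factorial d : ℝ) * (n : ℝ) ^ d *
        ((2 : ℝ) ^ d * B (d + 1) ((k : ℝ) + 1 / (2 * n : ℕ))) := by
        push_cast
        ring
    _ = _ := by
        rw [B.two_scale, Finset.mul_sum]
        simp only [doubled_arg]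
        exact Finset.sum_congr rfl fun j _ => by ring

theorem descent_poly_two_scale (d n : ℕ) (hd : 1 ≤ d) (hn : 1 ≤ n) (k : ℤ) :
    (Nat.factorial d : ℝ) * ((2 * n : ℕ) : ℝ) ^ d * B (d + 1) ((k : ℝ) + 1 / (2 * n : ℕ)) =
      ∑ j ∈ Finset.range (d + 2), ((d + 1).choose j : ℝ) *
        ((Nat.factorial d : ℝ) * (n : ℝ) ^ d * B (d + 1) (((2 * k - j : ℤ) : ℝ) + 1 / n)) :=
  descent_poly_two_scale_general d n k
end
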